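/- Let S be a type and let R₂ : O₂ → Set (S × S) be a domain model over S. Let D₃ be a domain model whose operators are indexed by a set O₃ of nonempty finite sequences of operators from O₂, with the operator reach set of each index seq ∈ O₃ defined to be Γ(seq), the reach set of seq over D₂. Then Γ(D₃) ⊆ Γ(D₂). (The macro-domain construction used in the proof of the backward implication of Theorem 1.) -/
import Mathlib


/-- Relational composition: `A ; B`. -/
def comp {S : Type*} (A B : Set (S × S)) : Set (S × S) :=
  {p | ∃ t, (p.1, t) ∈ A ∧ (t, p.2) ∈ B}

/-- Reach set of a nonempty finite sequence of operators, represented as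
a head operator together with the list of remaining operators. -/
def seqReach {S O : Type*} (R : O → Set (S × S)) : O → List O → Set (S × S)
  | o, [] => R o
  | o, o' :: rest => comp (R o) (seqReach R o' rest)

/-- Reach set of a domain model: union over all nonempty finite sequences of operators. -/
def domReach {S O : Type*} (R : O → Set (S × S)) : Set (S × S) :=
  ⋃ (o : O), ⋃ (l : List O), seqReach R o l

lemma seqReach_append {S O : Type*} (R : O → Set (S × S)) :
    ∀ (l : List O) (o o' : O) (l' : List O),
      seqReach R o (l ++ o' :: l') = comp (seqReach R o l) (seqReach R o' l')
  | [], o, o', l' => rfl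
  | a :: l, o, o', l' => by
    show comp (R o) (seqReach R a (l ++ o' :: l')) = _
    rw [seqReach_append R l a o' l']
    ext p
    constructor
    · rintro ⟨t, ht, u, hu, hu'⟩
      exact ⟨u, ⟨t, ht, hu⟩, hu'⟩
    · rintro ⟨u, ⟨t, ht, hu⟩, hu'⟩
      exact ⟨t, ht, u, hu, hu'⟩

/-- The macro-domain construction: a domain model whose operators are (indexed by)
a set of nonempty sequences of operators from `D₂`, each with reach set the reach
set of that sequence over `D₂`, has its reach set contained in `Γ(D₂)`. -/
theorem stmt_6 {S O₂ : Type*} (R₂ : O₂ → Set (S × S)) (O₃ : Set (O₂ × List O₂)) :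
    domReach (fun seq : O₃ => seqReach R₂ seq.1.1 seq.1.2) ⊆ domReach R₂ := by
  intro p hp
  simp only [domReach, Set.mem_iUnion] at hp ⊢
  obtain ⟨s, l, hp⟩ := hp
  induction l generalizing s p with
  | nil => exact ⟨s.1.1, s.1.2, hp⟩
  | cons s' l ih =>
    obtain ⟨t, ht, htp⟩ := hp
    obtain ⟨o, l', h⟩ := ih s' htp
    refine ⟨s.1.1, s.1.2 ++ o :: l', ?_⟩
    rw [seqReach_append]
    exact ⟨t, ht, h⟩
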